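/- arXiv:1610.08637 — 5 statements merged into one kernel-verified Lean document; each statement's English description precedes it below -/
import Mathlib

section
/- Let z_n be a nonnegative real sequence satisfying z_n ≤ (1 - λη_n) z_{n-1} + C η_n^{2+β} for all n, where C, λ, β > 0 and η_n is a decreasing positive sequence with 0 < λη_n ≤ 1. Then for any m ≤ n-1, z_n ≤ exp(-λ(n-m)η_n) z_m + C η_m^{1+β} λ^{-1}. -/
/-- If a nonnegative sequence `z` satisfies
`z n ≤ (1 - λ η n) z (n-1) + C (η n)^(2+β)` for all `n ≥ 1`,
where `η` is a decreasing positive sequence with `0 < λ η n ≤ 1`, then for any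
`m ≤ n - 1`, `z n ≤ exp (-λ (n-m) η n) z m + C (η m)^(1+β) / λ`. -/
theorem stmt_1 (z η : ℕ → ℝ) (C lam β : ℝ)
    (hC : 0 < C) (hlam : 0 < lam) (hβ : 0 < β)
    (hz_nonneg : ∀ n, 0 ≤ z n)
    (hη_pos : ∀ n, 0 < η n)
    (hη_anti : ∀ m n, m ≤ n → η n ≤ η m)
    (hη_le : ∀ n, lam * η n ≤ 1)
    (hrec : ∀ n : ℕ, 1 ≤ n → z n ≤ (1 - lam * η n) * z (n - 1) + C * η n ^ ((2 : ℝ) + β)) :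
    ∀ m n : ℕ, m ≤ n - 1 → 1 ≤ n →
      z n ≤ Real.exp (-lam * ((n : ℝ) - m) * η n) * z m + C * η m ^ ((1 : ℝ) + β) / lam := by
  have key : ∀ m k : ℕ, z (m + k) ≤
      Real.exp (-lam * (k : ℝ) * η (m + k)) * z m + C * η m ^ ((1 : ℝ) + β) / lam := by
    intro m k
    have hD : 0 ≤ C * η m ^ ((1 : ℝ) + β) / lam :=
      div_nonneg (mul_nonneg hC.le (Real.rpow_nonneg (hη_pos m).le _)) hlam.le
    induction k with
    | zero => simp; nlinarith [hz_nonneg m]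
    | succ k ih =>
      have hrec' := hrec (m + k + 1) (by omega)
      have hsub : m + k + 1 - 1 = m + k := by omega
      rw [hsub] at hrec'
      have hηpos := hη_pos (m + k + 1)
      have hle := hη_le (m + k + 1)
      have h01 : 0 ≤ 1 - lam * η (m + k + 1) := by linarith
      have hmono : η (m + k + 1) ≤ η (m + k) := hη_anti _ _ (by omega)
      have hmonom : η (m + k + 1) ≤ η m := hη_anti _ _ (by omega)
      have hexp1 : 1 - lam * η (m + k + 1) ≤ Real.exp (-(lam * η (m + k + 1))) := by
        have := Real.add_one_le_exp (-(lam * η (m + k + 1))); linarith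
      have hexp2 : Real.exp (-lam * (k : ℝ) * η (m + k)) ≤
          Real.exp (-lam * (k : ℝ) * η (m + k + 1)) := by
        apply Real.exp_le_exp.2
        have hk0 : (0 : ℝ) ≤ lam * (k : ℝ) := by positivity
        nlinarith
      have hpow : η (m + k + 1) ^ ((1 : ℝ) + β) ≤ η m ^ ((1 : ℝ) + β) :=
        Real.rpow_le_rpow (le_of_lt hηpos) hmonom (by linarith)
      have hsplit : η (m + k + 1) ^ ((2 : ℝ) + β)
          = η (m + k + 1) * η (m + k + 1) ^ ((1 : ℝ) + β) := by
        rw [show (2 : ℝ) + β = 1 + (1 + β) by ring, Real.rpow_add hηpos, Real.rpow_one]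
      have hstep2 : (1 - lam * η (m + k + 1)) * Real.exp (-lam * (k : ℝ) * η (m + k)) ≤
          Real.exp (-lam * ((k : ℝ) + 1) * η (m + k + 1)) := by
        calc (1 - lam * η (m + k + 1)) * Real.exp (-lam * (k : ℝ) * η (m + k))
            ≤ Real.exp (-(lam * η (m + k + 1))) * Real.exp (-lam * (k : ℝ) * η (m + k + 1)) :=
              mul_le_mul hexp1 hexp2 (Real.exp_pos _).le (Real.exp_pos _).le
          _ = Real.exp (-lam * ((k : ℝ) + 1) * η (m + k + 1)) := by
              rw [← Real.exp_add]; congr 1; ring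
      have hstep1 : z (m + k + 1) ≤ (1 - lam * η (m + k + 1)) *
          (Real.exp (-lam * (k : ℝ) * η (m + k)) * z m + C * η m ^ ((1 : ℝ) + β) / lam)
          + C * η (m + k + 1) ^ ((2 : ℝ) + β) := by
        nlinarith [mul_le_mul_of_nonneg_left ih h01]
      have hterm : C * η (m + k + 1) ^ ((2 : ℝ) + β) ≤
          lam * η (m + k + 1) * (C * η m ^ ((1 : ℝ) + β) / lam) := by
        rw [hsplit]
        have : lam * η (m + k + 1) * (C * η m ^ ((1 : ℝ) + β) / lam)
            = C * (η (m + k + 1) * η m ^ ((1 : ℝ) + β)) := by field_simp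
        rw [this]
        have := mul_le_mul_of_nonneg_left hpow (le_of_lt hηpos)
        nlinarith
      have hcast : ((k + 1 : ℕ) : ℝ) = (k : ℝ) + 1 := by push_cast; ring
      rw [show m + (k + 1) = m + k + 1 from rfl, hcast]
      nlinarith [mul_le_mul_of_nonneg_right hstep2 (hz_nonneg m),
        mul_nonneg h01 hD]
  intro m n hm hn
  obtain ⟨k, rfl⟩ : ∃ k, n = m + k := ⟨n - m, by omega⟩
  have hcast : ((m + k : ℕ) : ℝ) - (m : ℝ) = (k : ℝ) := by push_cast; ring
  rw [hcast]
  exact key m k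
end

section
/- Under the setting of the previous lemma (Y_j^k = ∏_{i=j+1}^k (I - η_i A), η_i = η i^{-α}, α ∈ [1/2,1), λ_min(A) ≥ λ_A > 0, η_i λ_max(A) ≤ 1), define S_j^k = Σ_{i=j+1}^k Y_j^i. Then ||S_j^k|| ≤ λ_A^{-1} η_k^{-1}, so ||S_j^k|| ≲ k^α. -/
open Finset Matrix
open scoped Matrix.Norms.L2Operator

section helpers
variable {d : ℕ}
open scoped MatrixOrder

private lemma norm_sq_eq_dot (v : Fin d → ℝ) :
    ‖(WithLp.equiv 2 (Fin d → ℝ)).symm v‖ ^ 2 = v ⬝ᵥ v := by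
  rw [← real_inner_self_eq_norm_sq]
  exact (EuclideanSpace.inner_toLp_toLp v v).trans (by rw [star_trivial])

private lemma dot_le_norm_mul (v w : Fin d → ℝ) :
    v ⬝ᵥ w ≤ ‖(WithLp.equiv 2 (Fin d → ℝ)).symm v‖ * ‖(WithLp.equiv 2 (Fin d → ℝ)).symm w‖ := by
  have := real_inner_le_norm ((WithLp.equiv 2 (Fin d → ℝ)).symm v) ((WithLp.equiv 2 (Fin d → ℝ)).symm w)
  rwa [show inner ℝ ((WithLp.equiv 2 (Fin d → ℝ)).symm v) ((WithLp.equiv 2 (Fin d → ℝ)).symm w) = v ⬝ᵥ w from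
    (EuclideanSpace.inner_toLp_toLp v w).trans (by rw [star_trivial, dotProduct_comm])] at this

private lemma symm_dot_move {B : Matrix (Fin d) (Fin d) ℝ} (hBt : Bᵀ = B) (u w : Fin d → ℝ) :
    (B *ᵥ u) ⬝ᵥ w = u ⬝ᵥ (B *ᵥ w) := by
  rw [Matrix.dotProduct_mulVec u B w, ← Matrix.mulVec_transpose, hBt, dotProduct_comm]

private lemma opnorm_le_of_forms {M : Matrix (Fin d) (Fin d) ℝ} (hM : M.PosSemidef) {c : ℝ}
    (hc : 0 ≤ c) (h2 : ∀ x : Fin d → ℝ, x ⬝ᵥ M *ᵥ x ≤ c * (x ⬝ᵥ x)) : ‖M‖ ≤ c := by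
  rw [Matrix.l2_opNorm_def]
  apply ContinuousLinearMap.opNorm_le_bound _ hc
  intro x
  set v : Fin d → ℝ := WithLp.equiv 2 (Fin d → ℝ) x with hv
  have hx : x = (WithLp.equiv 2 (Fin d → ℝ)).symm v := rfl
  have happ : ((Matrix.toEuclideanLin.trans LinearMap.toContinuousLinearMap) M) x
      = (WithLp.equiv 2 (Fin d → ℝ)).symm (M *ᵥ v) := rfl
  rw [happ]
  have key : (M *ᵥ v) ⬝ᵥ (M *ᵥ v) ≤ c ^ 2 * (v ⬝ᵥ v) := by
    set B := CFC.sqrt M with hB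
    have hBps := (CFC.sqrt_nonneg M).posSemidef
    have hBB : B * B = M := CFC.sqrt_mul_sqrt_self M hM.nonneg
    have hBt : Bᵀ = B := hBps.1
    have h1 : (M *ᵥ v) ⬝ᵥ (M *ᵥ v) = (B *ᵥ v) ⬝ᵥ (M *ᵥ (B *ᵥ v)) := by
      rw [← hBB, ← Matrix.mulVec_mulVec, symm_dot_move hBt, ← Matrix.mulVec_mulVec,
        Matrix.mulVec_mulVec (B *ᵥ v) B B]
    have h3 : (B *ᵥ v) ⬝ᵥ (B *ᵥ v) = v ⬝ᵥ (M *ᵥ v) := by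
      rw [symm_dot_move hBt, Matrix.mulVec_mulVec, hBB]
    calc (M *ᵥ v) ⬝ᵥ (M *ᵥ v) = (B *ᵥ v) ⬝ᵥ (M *ᵥ (B *ᵥ v)) := h1
      _ ≤ c * ((B *ᵥ v) ⬝ᵥ (B *ᵥ v)) := h2 _
      _ = c * (v ⬝ᵥ (M *ᵥ v)) := by rw [h3]
      _ ≤ c * (c * (v ⬝ᵥ v)) := by
            exact mul_le_mul_of_nonneg_left (h2 v) hc
      _ = c ^ 2 * (v ⬝ᵥ v) := by ring
  have hn1 := norm_sq_eq_dot (M *ᵥ v)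
  have hn2 := norm_sq_eq_dot v
  have hxn : ‖x‖ = ‖(WithLp.equiv 2 (Fin d → ℝ)).symm v‖ := rfl
  rw [hxn]
  have hsq : ‖(WithLp.equiv 2 (Fin d → ℝ)).symm (M *ᵥ v)‖ ^ 2 ≤ (c * ‖(WithLp.equiv 2 (Fin d → ℝ)).symm v‖) ^ 2 := by
    rw [hn1, mul_pow, hn2]; exact key
  exact (pow_le_pow_iff_left₀ (norm_nonneg _) (by positivity) two_ne_zero).mp hsq
end helpers

/-- In the setting of the products `Y j i = ∏_{m=j+1}^i (I - η m A)` with `η i = η i^(-α)`,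
`α ∈ [1/2,1)`, `λ_min(A) ≥ λ_A > 0`, `η i λ_max(A) ≤ 1`, the partial sums
`S j k = ∑_{i=j+1}^k Y j i` satisfy `‖S j k‖ ≤ λ_A⁻¹ (η k)⁻¹`
(so that `‖S j k‖ ≲ k^α`). -/
theorem stmt_6 {d : ℕ} (A : Matrix (Fin d) (Fin d) ℝ) (lamA η α : ℝ)
    (hA_psd : A.PosSemidef)
    (hlamA : 0 < lamA)
    (hmin : ∀ x : Fin d → ℝ, lamA * (x ⬝ᵥ x) ≤ x ⬝ᵥ A.mulVec x)
    (hα : 1 / 2 ≤ α ∧ α < 1) (hη : 0 < η)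
    (ηf : ℕ → ℝ) (hηf : ∀ i : ℕ, ηf i = η * (i : ℝ) ^ (-α))
    (hstep : ∀ i : ℕ, 1 ≤ i → ηf i * ‖A‖ ≤ 1)
    (j : ℕ) (hj : 1 ≤ j)
    (Y : ℕ → Matrix (Fin d) (Fin d) ℝ)
    (hY0 : Y j = 1)
    (hYrec : ∀ k : ℕ, j ≤ k → Y (k + 1) = (1 - ηf (k + 1) • A) * Y k) :
    ∀ k : ℕ, j < k → ‖∑ i ∈ Icc (j + 1) k, Y i‖ ≤ lamA⁻¹ * (ηf k)⁻¹ := by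
  intro k hk
  have hα0 : 0 < α := lt_of_lt_of_le (by norm_num) hα.1
  have hηfpos : ∀ i : ℕ, 1 ≤ i → 0 < ηf i := by
    intro i hi
    rw [hηf]
    have : (0:ℝ) < (i:ℝ) := by exact_mod_cast hi
    exact mul_pos hη (Real.rpow_pos_of_pos this _)
  have hk1 : 1 ≤ k := hj.trans hk.le
  have hηk : 0 < ηf k := hηfpos k hk1
  rcases Nat.eq_zero_or_pos d with hd | hd
  · subst hd
    have hz : (∑ i ∈ Icc (j + 1) k, Y i) = 0 := Subsingleton.elim _ _
    rw [hz, norm_zero]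
    positivity
  -- main case d > 0
  have hdot_nn : ∀ x : Fin d → ℝ, 0 ≤ x ⬝ᵥ x := fun x =>
    Finset.sum_nonneg fun i _ => mul_self_nonneg (x i)
  have hAop : ∀ x : Fin d → ℝ, x ⬝ᵥ A *ᵥ x ≤ ‖A‖ * (x ⬝ᵥ x) := by
    intro x
    have h1 := dot_le_norm_mul x (A *ᵥ x)
    have h2 : ‖(WithLp.equiv 2 (Fin d → ℝ)).symm (A *ᵥ x)‖
        ≤ ‖A‖ * ‖(WithLp.equiv 2 (Fin d → ℝ)).symm x‖ :=
      Matrix.l2_opNorm_mulVec A ((WithLp.equiv 2 (Fin d → ℝ)).symm x)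
    have h3 := norm_sq_eq_dot x
    nlinarith [norm_nonneg ((WithLp.equiv 2 (Fin d → ℝ)).symm x),
      norm_nonneg ((WithLp.equiv 2 (Fin d → ℝ)).symm (A *ᵥ x)), norm_nonneg A,
      mul_le_mul_of_nonneg_left h2 (norm_nonneg ((WithLp.equiv 2 (Fin d → ℝ)).symm x))]
  have hlamA_le : lamA ≤ ‖A‖ := by
    set x : Fin d → ℝ := Pi.single (⟨0, hd⟩ : Fin d) (1:ℝ) with hxdef
    have hxx : x ⬝ᵥ x = 1 := by
      simp [hxdef, dotProduct, Pi.single_apply]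
    have := hmin x
    have := hAop x
    rw [hxx] at *
    linarith
  have hform : ∀ (s : ℝ) (x : Fin d → ℝ),
      x ⬝ᵥ ((1 : Matrix (Fin d) (Fin d) ℝ) - s • A) *ᵥ x = x ⬝ᵥ x - s * (x ⬝ᵥ A *ᵥ x) := by
    intro s x
    rw [Matrix.sub_mulVec, Matrix.one_mulVec, Matrix.smul_mulVec, dotProduct_sub,
      dotProduct_smul, smul_eq_mul]
  have hMpsd : ∀ i, 1 ≤ i → ((1 : Matrix (Fin d) (Fin d) ℝ) - ηf i • A).PosSemidef := by
    intro i hi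
    refine Matrix.PosSemidef.of_dotProduct_mulVec_nonneg ?_ ?_
    · show ((1 : Matrix (Fin d) (Fin d) ℝ) - ηf i • A)ᴴ = _
      rw [Matrix.conjTranspose_sub, Matrix.conjTranspose_smul, Matrix.conjTranspose_one,
        hA_psd.1.eq, star_trivial]
    · intro x
      rw [star_trivial, hform]
      have h1 := hAop x
      have h2 := hstep i hi
      have h3 := hdot_nn x
      have h4 := (hηfpos i hi)
      nlinarith [mul_le_mul_of_nonneg_left h1 h4.le]
  have hMnorm : ∀ i, 1 ≤ i → ‖(1 : Matrix (Fin d) (Fin d) ℝ) - ηf i • A‖ ≤ 1 - ηf i * lamA := by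
    intro i hi
    have h4 := hηfpos i hi
    have hc : 0 ≤ 1 - ηf i * lamA := by nlinarith [hstep i hi]
    refine opnorm_le_of_forms (hMpsd i hi) hc ?_
    intro x
    rw [hform]
    have := hmin x
    nlinarith [mul_le_mul_of_nonneg_left (hmin x) h4.le]
  set P : ℕ → ℝ := fun i => ∏ m ∈ Icc (j+1) i, (1 - ηf m * lamA) with hPdef
  have hfacnn : ∀ m, 1 ≤ m → 0 ≤ 1 - ηf m * lamA := by
    intro m hm
    have := hηfpos m hm
    nlinarith [hstep m hm]
  have hfac1 : ∀ m, 1 ≤ m → 1 - ηf m * lamA ≤ 1 := by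
    intro m hm
    nlinarith [hηfpos m hm]
  have hPnn : ∀ i, 0 ≤ P i := by
    intro i
    refine Finset.prod_nonneg fun m hm => hfacnn m ?_
    have := (Finset.mem_Icc.mp hm).1
    omega
  have hPsucc : ∀ i, j ≤ i → P (i+1) = P i * (1 - ηf (i+1) * lamA) := by
    intro i hi
    exact Finset.prod_Icc_succ_top (by omega) _
  have hPj : P j = 1 := by
    show (∏ m ∈ Icc (j+1) j, (1 - ηf m * lamA)) = 1
    rw [Finset.Icc_eq_empty (by omega), Finset.prod_empty]
  have hone : ‖(1 : Matrix (Fin d) (Fin d) ℝ)‖ ≤ 1 := by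
    refine opnorm_le_of_forms Matrix.PosSemidef.one zero_le_one ?_
    intro x
    rw [Matrix.one_mulVec, one_mul]
  have hYle : ∀ i, j ≤ i → ‖Y i‖ ≤ P i := by
    intro i hi
    induction i, hi using Nat.le_induction with
    | base => rw [hY0, hPj]; exact hone
    | succ n hn ih =>
      rw [hYrec n hn, hPsucc n hn, mul_comm (P n)]
      calc ‖(1 - ηf (n + 1) • A) * Y n‖ ≤ ‖(1 : Matrix (Fin d) (Fin d) ℝ) - ηf (n+1) • A‖ * ‖Y n‖ :=
            Matrix.l2_opNorm_mul _ _
        _ ≤ (1 - ηf (n+1) * lamA) * P n :=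
            mul_le_mul (hMnorm (n+1) (by omega)) ih (norm_nonneg _) (hfacnn (n+1) (by omega))
  have hηmono : ∀ i, 1 ≤ i → i ≤ k → ηf k ≤ ηf i := by
    intro i hi hik
    rw [hηf, hηf]
    refine mul_le_mul_of_nonneg_left ?_ hη.le
    exact Real.rpow_le_rpow_of_nonpos (by exact_mod_cast hi) (by exact_mod_cast hik)
      (by linarith)
  have htel : ∀ n, j ≤ n → ∑ i ∈ Icc (j+1) n, ηf i * lamA * P i ≤ 1 - P n := by
    intro n hn
    induction n, hn using Nat.le_induction with
    | base =>
      rw [show Icc (j+1) j = ∅ from Finset.Icc_eq_empty (by omega), Finset.sum_empty, hPj]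
      norm_num
    | succ n hn ih =>
      rw [Finset.sum_Icc_succ_top (by omega : j + 1 ≤ n + 1)]
      have hp := hPsucc n hn
      have h1 : ηf (n+1) * lamA * P (n+1) ≤ P n - P (n+1) := by
        have hf1 := hfac1 (n+1) (by omega)
        have hpn := hPnn n
        have hx : 0 ≤ ηf (n+1) * lamA :=
          mul_nonneg (hηfpos (n+1) (by omega)).le hlamA.le
        have hle : P (n+1) ≤ P n := by
          rw [hp]
          calc P n * (1 - ηf (n+1) * lamA) ≤ P n * 1 :=
                mul_le_mul_of_nonneg_left hf1 hpn
            _ = P n := mul_one _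
        have h2 := mul_le_mul_of_nonneg_left hle hx
        have he : P n - P (n+1) = ηf (n+1) * lamA * P n := by rw [hp]; ring
        nlinarith
      linarith
  have hsum_le : ‖∑ i ∈ Icc (j + 1) k, Y i‖ ≤ ∑ i ∈ Icc (j+1) k, P i := by
    refine (norm_sum_le _ _).trans (Finset.sum_le_sum fun i hi => ?_)
    exact hYle i (by have := (Finset.mem_Icc.mp hi).1; omega)
  have hmain : lamA * ηf k * ∑ i ∈ Icc (j+1) k, P i ≤ 1 := by
    calc lamA * ηf k * ∑ i ∈ Icc (j+1) k, P i
        = ∑ i ∈ Icc (j+1) k, lamA * ηf k * P i := Finset.mul_sum _ _ _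
      _ ≤ ∑ i ∈ Icc (j+1) k, ηf i * lamA * P i := by
          refine Finset.sum_le_sum fun i hi => ?_
          obtain ⟨hi1, hi2⟩ := Finset.mem_Icc.mp hi
          have h := mul_le_mul_of_nonneg_right
            (mul_le_mul_of_nonneg_left (hηmono i (by omega) hi2) hlamA.le) (hPnn i)
          nlinarith [h]
      _ ≤ 1 - P k := htel k hk.le
      _ ≤ 1 := by linarith [hPnn k]
  have hfin : ∑ i ∈ Icc (j+1) k, P i ≤ lamA⁻¹ * (ηf k)⁻¹ := by
    rw [← mul_inv, ← one_div, le_div_iff₀ (mul_pos hlamA hηk), mul_comm]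
    exact hmain
  exact hsum_le.trans hfin
end

section
/- Let η_i = η i^{-α} with η > 0 and 0 < α < 1. For integers j ≤ m ≤ i, the step size difference satisfies η_{m-1} - η_m ≤ (2^{α+1} η / α) m^{-α-1} for m ≥ 2, and consequently η_j - η_i ≤ (4/(ηα)) (i+1)^α j^{-1} η_{i+1} Σ_{m=j+1}^{i} η_m. -/
open Finset

lemma stmt_8_aux1 (α : ℝ) (hα0 : 0 < α) (hα1 : α < 1) {x : ℝ} (hx : 2 ≤ x) :
    (x - 1) ^ (-α) - x ^ (-α) ≤ 2 * α * x ^ (-α - 1) := by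
  have ha : (1 : ℝ) ≤ x - 1 := by linarith
  have ha0 : (0 : ℝ) < x - 1 := by linarith
  have hx0 : (0 : ℝ) < x := by linarith
  set A := (x - 1) ^ α with hA
  set B := x ^ α with hB
  have hA0 : 0 < A := Real.rpow_pos_of_pos ha0 _
  have hB0 : 0 < B := Real.rpow_pos_of_pos hx0 _
  -- Bernoulli: B ≤ A * (1 + α/(x-1))
  have hbern : (1 + 1 / (x - 1)) ^ α ≤ 1 + α * (1 / (x - 1)) := by
    have := rpow_one_add_le_one_add_mul_self
      (s := 1 / (x - 1)) (le_trans (by norm_num : (-1:ℝ) ≤ 0) (by positivity)) hα0.le hα1.le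
    linarith [this]
  have hpow : B ≤ A * (1 + α / (x - 1)) := by
    have hxeq : x = (x - 1) * (1 + 1 / (x - 1)) := by field_simp; ring
    calc B = ((x - 1) * (1 + 1 / (x - 1))) ^ α := by rw [hB, ← hxeq]
      _ = (x - 1) ^ α * (1 + 1 / (x - 1)) ^ α :=
          Real.mul_rpow ha0.le (by positivity)
      _ ≤ A * (1 + α * (1 / (x - 1))) := by
          apply mul_le_mul_of_nonneg_left hbern hA0.le
      _ = A * (1 + α / (x - 1)) := by ring
  have hAinv : (x - 1) ^ (-α) = A⁻¹ := by
    rw [Real.rpow_neg ha0.le]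
  have hBinv : x ^ (-α) = B⁻¹ := by
    rw [Real.rpow_neg hx0.le]
  have hxpow : x ^ (-α - 1) = (x * B)⁻¹ := by
    rw [show -α - 1 = -(α + 1) by ring, Real.rpow_neg hx0.le,
      Real.rpow_add hx0, Real.rpow_one]
    rw [mul_comm]
  rw [hAinv, hBinv, hxpow]
  have h1 : A⁻¹ - B⁻¹ ≤ α / ((x - 1) * B) := by
    rw [inv_sub_inv hA0.ne' hB0.ne', div_le_div_iff₀ (by positivity) (by positivity)]
    have hBA : B - A ≤ α * A / (x - 1) := by
      have : A * (1 + α / (x - 1)) = A + α * A / (x - 1) := by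
        field_simp
      linarith [hpow, this ▸ hpow]
    calc (B - A) * ((x - 1) * B) ≤ (α * A / (x - 1)) * ((x - 1) * B) := by
          apply mul_le_mul_of_nonneg_right hBA (by positivity)
      _ = α * (A * B) := by field_simp
  have h2 : α / ((x - 1) * B) ≤ 2 * α * (x * B)⁻¹ := by
    have hxx : x ≤ 2 * (x - 1) := by linarith
    rw [show 2 * α * (x * B)⁻¹ = (2 * α) / (x * B) by ring]
    rw [div_le_div_iff₀ (by positivity) (by positivity)]
    nlinarith [mul_le_mul_of_nonneg_right hxx (mul_pos hα0 hB0).le]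
  linarith

/-- For `η i = η i^(-α)` with `η > 0`, `α ∈ (0,1)`: for `m ≥ 2`,
`η (m-1) - η m ≤ (2^(α+1) η / α) m^(-α-1)`, and consequently for `1 ≤ j ≤ i`,
`η j - η i ≤ (4/(η α)) (i+1)^α j⁻¹ η (i+1) ∑_{m=j+1}^i η m`. -/
theorem stmt_8 (η α : ℝ) (hη : 0 < η) (hα : 0 < α ∧ α < 1)
    (ηf : ℕ → ℝ) (hηf : ∀ i : ℕ, ηf i = η * (i : ℝ) ^ (-α)) :
    (∀ m : ℕ, 2 ≤ m →
      ηf (m - 1) - ηf m ≤ (2 : ℝ) ^ (α + 1) * η / α * (m : ℝ) ^ (-α - 1)) ∧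
    (∀ j i : ℕ, 1 ≤ j → j ≤ i →
      ηf j - ηf i ≤
        4 / (η * α) * ((i : ℝ) + 1) ^ α * ((j : ℝ))⁻¹ * ηf (i + 1) *
          ∑ m ∈ Icc (j + 1) i, ηf m) := by
  obtain ⟨hα0, hα1⟩ := hα
  have hpart1 : ∀ m : ℕ, 2 ≤ m →
      ηf (m - 1) - ηf m ≤ (2 : ℝ) ^ (α + 1) * η / α * (m : ℝ) ^ (-α - 1) := by
    intro m hm
    have hx : (2 : ℝ) ≤ (m : ℝ) := by exact_mod_cast hm
    have hcast : ((m - 1 : ℕ) : ℝ) = (m : ℝ) - 1 := by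
      have : 1 ≤ m := by omega
      push_cast [this]; ring
    rw [hηf, hηf, hcast]
    have key := stmt_8_aux1 α hα0 hα1 hx
    have hconst : 2 * α ≤ (2 : ℝ) ^ (α + 1) / α := by
      rw [le_div_iff₀ hα0]
      have h1 : (1 : ℝ) ≤ (2 : ℝ) ^ α := by
        calc (1 : ℝ) = (2:ℝ) ^ (0:ℝ) := by simp
          _ ≤ (2:ℝ) ^ α := Real.rpow_le_rpow_of_exponent_le one_le_two hα0.le
      have h2 : (2 : ℝ) ^ (α + 1) = 2 * (2 : ℝ) ^ α := by
        rw [Real.rpow_add (by norm_num), Real.rpow_one]; ring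
      nlinarith
    have hpos : (0 : ℝ) ≤ (m : ℝ) ^ (-α - 1) :=
      Real.rpow_nonneg (by linarith) _
    calc η * ((m:ℝ) - 1) ^ (-α) - η * (m:ℝ) ^ (-α)
        = η * (((m:ℝ) - 1) ^ (-α) - (m:ℝ) ^ (-α)) := by ring
      _ ≤ η * (2 * α * (m:ℝ) ^ (-α - 1)) := by
          apply mul_le_mul_of_nonneg_left key hη.le
      _ ≤ η * ((2 : ℝ) ^ (α + 1) / α * (m:ℝ) ^ (-α - 1)) := by
          apply mul_le_mul_of_nonneg_left _ hη.le
          exact mul_le_mul_of_nonneg_right hconst hpos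
      _ = (2 : ℝ) ^ (α + 1) * η / α * (m : ℝ) ^ (-α - 1) := by ring
  refine ⟨hpart1, ?_⟩
  intro j i hj hji
  have hj0 : (0 : ℝ) < (j : ℝ) := by exact_mod_cast hj
  have claim : ∀ i : ℕ, j ≤ i →
      ηf j - ηf i ≤ 4 / α * (j : ℝ)⁻¹ * ∑ m ∈ Icc (j + 1) i, ηf m := by
    intro i hji
    induction i, hji using Nat.le_induction with
    | base =>
        rw [Finset.Icc_eq_empty (by omega), Finset.sum_empty, sub_self]
        simp
    | succ i hji ih =>
        have hsum : (∑ m ∈ Icc (j + 1) (i + 1), ηf m)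
            = (∑ m ∈ Icc (j + 1) i, ηf m) + ηf (i + 1) := by
          rw [← Finset.sum_Icc_succ_top (by omega : j + 1 ≤ i + 1)]
        have hstep : ηf i - ηf (i + 1) ≤ 4 / α * (j : ℝ)⁻¹ * ηf (i + 1) := by
          have h2 : 2 ≤ i + 1 := by omega
          have h1 := hpart1 (i + 1) h2
          simp only [Nat.add_sub_cancel] at h1
          have hx1 : (0 : ℝ) < ((i:ℝ) + 1) := by positivity
          have hsplit : ((i + 1 : ℕ) : ℝ) ^ (-α - 1)
              = ((i:ℝ) + 1) ^ (-α) * ((i:ℝ) + 1)⁻¹ := by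
            push_cast
            rw [show -α - 1 = -α + (-1) by ring, Real.rpow_add hx1, Real.rpow_neg_one]
          rw [hsplit] at h1
          have hjx : ((i:ℝ) + 1)⁻¹ ≤ (j : ℝ)⁻¹ := by
            apply inv_anti₀ hj0
            have : (j : ℝ) ≤ (i : ℝ) := by exact_mod_cast hji
            linarith
          have h4 : (2 : ℝ) ^ (α + 1) ≤ 4 := by
            calc (2:ℝ) ^ (α + 1) ≤ (2:ℝ) ^ (2:ℝ) :=
                Real.rpow_le_rpow_of_exponent_le one_le_two (by linarith)
              _ = 4 := by
                rw [show (2:ℝ) = ((2:ℕ):ℝ) by norm_num, Real.rpow_natCast]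
                norm_num
          have hq : (0 : ℝ) ≤ ((i:ℝ) + 1) ^ (-α) := Real.rpow_nonneg hx1.le _
          calc ηf i - ηf (i + 1)
              ≤ (2:ℝ) ^ (α + 1) * η / α * (((i:ℝ) + 1) ^ (-α) * ((i:ℝ) + 1)⁻¹) := h1
            _ ≤ 4 * η / α * (((i:ℝ) + 1) ^ (-α) * (j : ℝ)⁻¹) := by
                gcongr
            _ = 4 / α * (j : ℝ)⁻¹ * (η * ((i:ℝ) + 1) ^ (-α)) := by ring
            _ = 4 / α * (j : ℝ)⁻¹ * ηf (i + 1) := by rw [hηf (i + 1)]; push_cast; ring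
        rw [hsum, mul_add]
        linarith [ih]
  have hip : (0 : ℝ) < (i : ℝ) + 1 := by positivity
  have hone : ((i : ℝ) + 1) ^ α * ((i : ℝ) + 1) ^ (-α) = 1 := by
    rw [← Real.rpow_add hip]; simp
  have hrhs : 4 / (η * α) * ((i : ℝ) + 1) ^ α * ((j : ℝ))⁻¹ * ηf (i + 1) *
        (∑ m ∈ Icc (j + 1) i, ηf m)
      = 4 / α * (j : ℝ)⁻¹ * ∑ m ∈ Icc (j + 1) i, ηf m := by
    rw [hηf (i + 1)]
    push_cast
    rw [show 4 / (η * α) * ((i:ℝ) + 1) ^ α * (j:ℝ)⁻¹ * (η * ((i:ℝ) + 1) ^ (-α)) *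
          (∑ m ∈ Icc (j + 1) i, ηf m)
        = 4 / α * (η⁻¹ * η) * (((i:ℝ) + 1) ^ α * ((i:ℝ) + 1) ^ (-α)) * (j:ℝ)⁻¹ *
          (∑ m ∈ Icc (j + 1) i, ηf m) by ring]
    rw [hone, inv_mul_cancel₀ hη.ne']
    ring
  rw [hrhs]
  exact claim i hji
end

section
/- With e_k = ((k+1)N)^{1/(1-α)}, n_k = e_k - e_{k-1}, and η_i = η i^{-α} (α ∈ (0,1), η, N > 0), the sum of step sizes within the k-th batch satisfies Σ_{i=s_k}^{e_k} η_i ≥ η_{e_k} n_k ≥ c N for a constant c > 0 depending only on η, α, where s_k = e_{k-1} + 1. -/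
open Finset

set_option maxHeartbeats 1000000 in
/-- With batch endpoints `e k = ⌊((k+1)N)^(1/(1-α))⌋` and step sizes `η i = η i^(-α)`
(`α ∈ (0,1)`, `η > 0`), the sum of step sizes within the `k`-th batch satisfies
`∑_{i=e_{k-1}+1}^{e_k} η i ≥ η_{e_k} n_k ≥ c N` for a constant `c > 0` depending
only on `η` and `α`, where `n_k = e_k - e_{k-1}`. -/
theorem stmt_11 (η α : ℝ) (hη : 0 < η) (hα : 0 < α ∧ α < 1)
    (ηf : ℕ → ℝ) (hηf : ∀ i : ℕ, ηf i = η * (i : ℝ) ^ (-α)) :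
    ∃ c : ℝ, 0 < c ∧ ∀ N : ℝ, 1 ≤ N → ∀ k : ℕ, 1 ≤ k →
      ∀ e : ℕ → ℕ, (∀ m : ℕ, e m = ⌊(((m : ℝ) + 1) * N) ^ ((1 : ℝ) / (1 - α))⌋₊) →
        c * N ≤ ηf (e k) * ((e k : ℝ) - (e (k - 1) : ℝ)) ∧
        ηf (e k) * ((e k : ℝ) - (e (k - 1) : ℝ)) ≤ ∑ i ∈ Icc (e (k - 1) + 1) (e k), ηf i := by
  obtain ⟨hα0, hα1⟩ := hα
  have h1α : (0:ℝ) < 1 - α := by linarith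
  set β : ℝ := 1/(1-α) with hβdef
  have hβpos : 0 < β := by positivity
  have hβ1 : 1 ≤ β := by rw [hβdef, le_div_iff₀ h1α]; linarith
  have hαβ : β * (-α) = 1 - β := by rw [hβdef]; field_simp; ring
  refine ⟨η/2, by positivity, ?_⟩
  intro N hN k hk e he
  have hNpos : (0:ℝ) < N := lt_of_lt_of_le one_pos hN
  have hkR : (1:ℝ) ≤ (k:ℝ) := by exact_mod_cast hk
  have hk1 : ((k - 1 : ℕ) : ℝ) + 1 = (k : ℝ) := by
    rw [Nat.cast_sub hk]; push_cast; ring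
  set X : ℝ := (((k:ℝ)+1)*N) ^ β with hXdef
  set Y : ℝ := ((k:ℝ)*N) ^ β with hYdef
  have hbaseY : (1:ℝ) ≤ (k:ℝ)*N := by nlinarith
  have hbaseX : (0:ℝ) < ((k:ℝ)+1)*N := by nlinarith
  have hYX : (k:ℝ)*N ≤ ((k:ℝ)+1)*N := by nlinarith
  have hek : e k = ⌊X⌋₊ := he k
  have hek1 : e (k-1) = ⌊Y⌋₊ := by rw [he (k-1), hk1]
  -- Y ≥ 1
  have hY1 : (1:ℝ) ≤ Y := by
    calc (1:ℝ) = 1 ^ β := (Real.one_rpow β).symm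
    _ ≤ Y := Real.rpow_le_rpow zero_le_one hbaseY hβpos.le
  have hX1 : (1:ℝ) ≤ X := hY1.trans (Real.rpow_le_rpow (by positivity) hYX hβpos.le)
  -- gap estimate in reals: X - Y ≥ N^β * (k+1)^(β-1)
  have hgapXY : N ^ β * ((k:ℝ)+1) ^ (β-1) ≤ X - Y := by
    have hkpos : (0:ℝ) < (k:ℝ) := lt_of_lt_of_le one_pos hkR
    have hk1pos : (0:ℝ) < (k:ℝ)+1 := by linarith
    have hXsplit : X = ((k:ℝ)+1) ^ β * N ^ β :=
      Real.mul_rpow (by linarith) hNpos.le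
    have hYsplit : Y = (k:ℝ) ^ β * N ^ β := Real.mul_rpow hkpos.le hNpos.le
    have h1 : ((k:ℝ)+1) ^ β = ((k:ℝ)+1) ^ (β-1) * ((k:ℝ)+1) := by
      rw [← Real.rpow_add_one hk1pos.ne']; ring_nf
    have h2 : (k:ℝ) ^ β = (k:ℝ) ^ (β-1) * (k:ℝ) := by
      rw [← Real.rpow_add_one hkpos.ne']; ring_nf
    have h3 : (k:ℝ) ^ (β-1) ≤ ((k:ℝ)+1) ^ (β-1) :=
      Real.rpow_le_rpow hkpos.le (by linarith) (by linarith)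
    have hNβ : (0:ℝ) ≤ N ^ β := by positivity
    have h4 : (k:ℝ) ^ (β-1) * (k:ℝ) * N ^ β ≤ ((k:ℝ)+1) ^ (β-1) * (k:ℝ) * N ^ β :=
      mul_le_mul_of_nonneg_right (mul_le_mul_of_nonneg_right h3 hkpos.le) hNβ
    rw [hXsplit, hYsplit, h1, h2]
    nlinarith [h4]
  have hgap1 : (1:ℝ) ≤ X - Y := by
    have hNβ : (1:ℝ) ≤ N ^ β := by
      calc (1:ℝ) = 1 ^ β := (Real.one_rpow β).symm
      _ ≤ N ^ β := Real.rpow_le_rpow zero_le_one hN hβpos.le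
    have hk1β : (1:ℝ) ≤ ((k:ℝ)+1) ^ (β-1) := by
      calc (1:ℝ) = 1 ^ (β-1) := (Real.one_rpow _).symm
      _ ≤ _ := Real.rpow_le_rpow zero_le_one (by linarith) (by linarith)
    nlinarith
  -- floor gap
  have hfloorle : ⌊Y⌋₊ ≤ ⌊X⌋₊ := Nat.floor_le_floor (by linarith)
  have hfloor1 : ⌊Y⌋₊ + 1 ≤ ⌊X⌋₊ := by
    have : ⌊Y + 1⌋₊ ≤ ⌊X⌋₊ := Nat.floor_le_floor (by linarith)
    rwa [Nat.floor_add_one (by linarith : (0:ℝ) ≤ Y)] at this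
  have hgapR : (X - Y)/2 ≤ (⌊X⌋₊ : ℝ) - (⌊Y⌋₊ : ℝ) := by
    rcases le_or_gt (X - Y) 2 with h2 | h2
    · have : (1:ℝ) ≤ (⌊X⌋₊ : ℝ) - (⌊Y⌋₊ : ℝ) := by
        have := hfloor1
        have : ((⌊Y⌋₊ + 1 : ℕ) : ℝ) ≤ (⌊X⌋₊ : ℝ) := by exact_mod_cast this
        push_cast at this; linarith
      linarith
    · have h3 : X - 1 < (⌊X⌋₊ : ℝ) := Nat.sub_one_lt_floor X
      have h4 : (⌊Y⌋₊ : ℝ) ≤ Y := Nat.floor_le (by linarith)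
      linarith
  -- floor X ≥ 1 and ≤ X
  have hfX1 : 1 ≤ ⌊X⌋₊ := Nat.le_floor (by exact_mod_cast hX1)
  have hfXpos : (0:ℝ) < (⌊X⌋₊ : ℝ) := by exact_mod_cast hfX1
  have hfXle : (⌊X⌋₊ : ℝ) ≤ X := Nat.floor_le (by linarith)
  -- ηf (e k) ≥ η * X^(-α)
  have hηek : η * X ^ (-α) ≤ ηf (e k) := by
    rw [hηf, hek]
    have := Real.rpow_le_rpow_of_nonpos hfXpos hfXle (by linarith : -α ≤ 0)
    nlinarith
  -- key identity: X^(-α) * (N^β * (k+1)^(β-1)) = N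
  have hkey : X ^ (-α) * (N ^ β * ((k:ℝ)+1) ^ (β-1)) = N := by
    have hk1pos : (0:ℝ) < (k:ℝ)+1 := by linarith
    have hXneg : X ^ (-α) = ((k:ℝ)+1) ^ (1-β) * N ^ (1-β) := by
      rw [hXdef, ← Real.rpow_mul hbaseX.le, hαβ,
        Real.mul_rpow hk1pos.le hNpos.le]
    rw [hXneg]
    have e1 : ((k:ℝ)+1) ^ (1-β) * ((k:ℝ)+1) ^ (β-1) = 1 := by
      rw [← Real.rpow_add hk1pos]; norm_num
    have e2 : N ^ (1-β) * N ^ β = N := by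
      rw [← Real.rpow_add hNpos]; norm_num
    calc ((k:ℝ)+1) ^ (1-β) * N ^ (1-β) * (N ^ β * ((k:ℝ)+1) ^ (β-1))
        = (((k:ℝ)+1) ^ (1-β) * ((k:ℝ)+1) ^ (β-1)) * (N ^ (1-β) * N ^ β) := by ring
      _ = N := by rw [e1, e2]; ring
  have hXnegpos : (0:ℝ) < X ^ (-α) := Real.rpow_pos_of_pos (by linarith) _
  have hgappos : (0:ℝ) ≤ (⌊X⌋₊ : ℝ) - (⌊Y⌋₊ : ℝ) := by
    have : N ^ β * ((k:ℝ)+1) ^ (β-1) ≤ X - Y := hgapXY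
    nlinarith
  constructor
  · -- first inequality
    rw [hek, hek1]
    rw [hek] at hηek
    have hηfXpos : (0:ℝ) < η * X ^ (-α) := by positivity
    have h5 : η * X ^ (-α) * ((X - Y)/2) ≤ ηf ⌊X⌋₊ * ((⌊X⌋₊ : ℝ) - (⌊Y⌋₊ : ℝ)) :=
      mul_le_mul hηek hgapR (by linarith) (hηfXpos.trans_le hηek).le
    have h7 : N ≤ X ^ (-α) * (X - Y) :=
      hkey ▸ mul_le_mul_of_nonneg_left hgapXY hXnegpos.le
    have h6 := mul_le_mul_of_nonneg_left h7 (show (0:ℝ) ≤ η/2 by positivity)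
    calc η/2 * N ≤ η/2 * (X ^ (-α) * (X - Y)) := h6
      _ = η * X ^ (-α) * ((X - Y)/2) := by ring
      _ ≤ _ := h5
  · -- second inequality
    have hmain : ∀ a b : ℕ, a ≤ b → ηf b * ((b:ℝ) - (a:ℝ)) ≤ ∑ i ∈ Icc (a+1) b, ηf i := by
      intro a b hab
      have hterm : ∀ i ∈ Icc (a+1) b, ηf b ≤ ηf i := by
        intro i hi
        rw [mem_Icc] at hi
        rw [hηf, hηf]
        have hipos : (0:ℝ) < (i:ℝ) := by
          have : 0 < i := lt_of_lt_of_le (Nat.succ_pos a) hi.1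
          exact_mod_cast this
        have hib : (i:ℝ) ≤ (b:ℝ) := by exact_mod_cast hi.2
        exact mul_le_mul_of_nonneg_left
          (Real.rpow_le_rpow_of_nonpos hipos hib (by linarith : -α ≤ 0)) hη.le
      have hsum := Finset.card_nsmul_le_sum _ _ _ hterm
      rw [Nat.card_Icc, show b + 1 - (a+1) = b - a by omega, nsmul_eq_mul,
        Nat.cast_sub hab] at hsum
      rw [mul_comm]
      exact hsum
    have := hmain (e (k-1)) (e k) (by rw [hek, hek1]; exact hfloorle)
    exact this
end

section
/- Suppose x_n satisfies the recursion E_{n-1}||x_n - x*||² ≤ (1 - μη_n + C₁η_n²)||x_{n-1} - x*||² + C₁η_n² with η_n = η n^{-α}, α ∈ (0,1), μ, C₁, η > 0. Then E||x_n - x*||² ≲ n^{-α}(1 + ||x_0 - x*||²), with the implicit constant depending only on μ, C₁, η, α. -/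
/-!
Taking expectations turns the conditional recursion into the deterministic recursion
`zₙ ≤ (1 - μηₙ + C₁ηₙ²) zₙ₋₁ + C₁ηₙ²` for `zₙ = E‖xₙ - x*‖²`. Once `ηₙ` is small the coefficient
is at most `1 - μηₙ/2`, and `n^{-α}` decays slowly enough, `(n-1)^{-α} ≤ (1 + μηₙ/4) n^{-α}` for
large `n` (because `1/n = o(n^{-α})`), that the bound `zₙ ≤ M n^{-α}` propagates by induction as
soon as `M ≥ 4C₁η/μ`. The finitely many initial steps are bounded crudely by a product of the
coefficients times `1 + z₀`.
-/

open MeasureTheory Filter Topology Finset Real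

lemma integral_le_integral_of_condExp_le {Ω : Type*} {m m0 : MeasurableSpace Ω}
    {μ : Measure Ω} [IsFiniteMeasure μ] (hm : m ≤ m0) {f g : Ω → ℝ} (hg : Integrable g μ)
    (hfg : μ[f|m] ≤ᵐ[μ] g) : ∫ ω, f ω ∂μ ≤ ∫ ω, g ω ∂μ := by
  rw [← integral_condExp hm]
  exact integral_mono_ae integrable_condExp hg hfg

lemma le_prod_mul_of_le_mul_add {z A B : ℕ → ℝ} (hz : ∀ n, 0 ≤ z n)
    (hrec : ∀ n, z (n + 1) ≤ A n * z n + B n) {n N : ℕ} (hn : n ≤ N) :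
    z n ≤ (∏ k ∈ range N, (|A k| + |B k| + 1)) * (1 + z 0) := by
  have hfactor : ∀ k, 1 ≤ |A k| + |B k| + 1 := fun k => by
    linarith [abs_nonneg (A k), abs_nonneg (B k)]
  have hprod : ∀ n, 1 + z n ≤ (∏ k ∈ range n, (|A k| + |B k| + 1)) * (1 + z 0) := by
    intro n
    induction n with
    | zero => simp
    | succ n ih =>
      calc 1 + z (n + 1) ≤ (|A n| + |B n| + 1) * (1 + z n) := by
            nlinarith [hrec n, le_abs_self (A n), le_abs_self (B n), abs_nonneg (A n),
              abs_nonneg (B n), hz n]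
        _ ≤ (|A n| + |B n| + 1) * ((∏ k ∈ range n, (|A k| + |B k| + 1)) * (1 + z 0)) := by
            gcongr
        _ = _ := by rw [prod_range_succ]; ring
  calc z n ≤ 1 + z n := by linarith
    _ ≤ (∏ k ∈ range n, (|A k| + |B k| + 1)) * (1 + z 0) := hprod n
    _ ≤ (∏ k ∈ range N, (|A k| + |B k| + 1)) * (1 + z 0) :=
        mul_le_mul_of_nonneg_right (prod_le_prod_of_subset_of_one_le (range_subset_range.2 hn)
          (fun k _ => by linarith [hfactor k]) (fun k _ _ => hfactor k)) (by linarith [hz 0])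

lemma le_mul_of_le_one_sub_mul_add_sq {z s : ℕ → ℝ} {a b η M : ℝ} {N : ℕ} (hη : 0 ≤ η)
    (hs : ∀ n, 0 ≤ s n) (hz : ∀ n, 0 ≤ z n) (hM : 0 ≤ M) (hbM : b * η ≤ a / 4 * M)
    (hrec : ∀ n ≥ N, z (n + 1) ≤
      (1 - a * (η * s (n + 1)) + b * (η * s (n + 1)) ^ 2) * z n + b * (η * s (n + 1)) ^ 2)
    (hsmall : ∀ n ≥ N, b * (η * s (n + 1)) ≤ a / 2)
    (hcontr : ∀ n ≥ N, a / 2 * (η * s (n + 1)) ≤ 1)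
    (hratio : ∀ n ≥ N, s n ≤ (1 + a / 4 * (η * s (n + 1))) * s (n + 1))
    (hzN : z N ≤ M * s N) : ∀ n ≥ N, z n ≤ M * s n := by
  intro n hn
  induction n, hn using Nat.le_induction with
  | base => exact hzN
  | succ n hn ih =>
    set e := η * s (n + 1)
    have he : 0 ≤ e := mul_nonneg hη (hs _)
    have hcoef : (1 - a * e + b * e ^ 2) * z n ≤ (1 - a / 2 * e) * z n :=
      mul_le_mul_of_nonneg_right (by nlinarith [mul_le_mul_of_nonneg_right (hsmall n hn) he])
        (hz n)
    have hcontr' : 0 ≤ 1 - a / 2 * e := by linarith [hcontr n hn]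
    calc z (n + 1) ≤ (1 - a / 2 * e) * (M * s n) + b * e ^ 2 := by
          nlinarith [hrec n hn, mul_le_mul_of_nonneg_left ih hcontr']
      _ ≤ (1 - a / 2 * e) * (M * ((1 + a / 4 * e) * s (n + 1))) + b * e ^ 2 := by
          gcongr
          exact hratio n hn
      -- of the contraction `a e / 2`, one half pays for the growth of `s`, the other absorbs `b e²`
      _ = (1 - a / 4 * e) * (M * s (n + 1)) - a ^ 2 / 8 * e ^ 2 * (M * s (n + 1))
          + b * η * (e * s (n + 1)) := by ring
      _ ≤ (1 - a / 4 * e) * (M * s (n + 1)) + a / 4 * M * (e * s (n + 1)) := by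
          nlinarith [mul_le_mul_of_nonneg_right hbM (mul_nonneg he (hs (n + 1))),
            mul_nonneg (mul_nonneg (sq_nonneg a) (sq_nonneg e)) (mul_nonneg hM (hs (n + 1)))]
      _ = M * s (n + 1) := by ring

lemma rpow_neg_sub_one_le {α y : ℝ} (hα : α ≤ 1) (hy : 2 ≤ y) :
    (y - 1) ^ (-α) ≤ (1 + 2 / y) * y ^ (-α) := by
  have hy1 : 0 < y - 1 := by linarith
  have hsplit : (y - 1) ^ (-α) = (y / (y - 1)) ^ α * y ^ (-α) := by
    rw [div_rpow (by linarith) hy1.le, rpow_neg (x := y) (by linarith), rpow_neg hy1.le]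
    field_simp
  have hratio : y / (y - 1) ≤ 1 + 2 / y := by
    rw [div_le_iff₀ hy1, add_mul, div_mul_eq_mul_div, one_mul]
    have : 1 ≤ 2 * (y - 1) / y := by rw [le_div_iff₀ (by linarith)]; linarith
    linarith
  rw [hsplit]
  gcongr
  exact (rpow_le_self_of_one_le (by rw [le_div_iff₀ hy1]; linarith) hα).trans hratio

lemma eventually_rpow_neg_sub_one_le {α c : ℝ} (hα : α < 1) (hc : 0 < c) :
    ∀ᶠ y : ℝ in atTop, (y - 1) ^ (-α) ≤ (1 + c * y ^ (-α)) * y ^ (-α) := by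
  filter_upwards [eventually_ge_atTop 2,
    (tendsto_rpow_atTop (sub_pos.2 hα)).eventually_ge_atTop (2 / c)] with y hy hpow
  have hy0 : 0 < y := by linarith
  have htwo : 2 / y ≤ c * y ^ (-α) := by
    rw [div_le_iff₀ hy0, mul_assoc, ← rpow_add_one hy0.ne', neg_add_eq_sub]
    rwa [div_le_iff₀' hc] at hpow
  calc (y - 1) ^ (-α) ≤ (1 + 2 / y) * y ^ (-α) := rpow_neg_sub_one_le hα.le hy
    _ ≤ (1 + c * y ^ (-α)) * y ^ (-α) := by gcongr

lemma eventually_natCast_rpow_neg_le_succ {α c : ℝ} (hα : α < 1) (hc : 0 < c) :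
    ∀ᶠ n : ℕ in atTop,
      (n : ℝ) ^ (-α) ≤ (1 + c * ((n + 1 : ℕ) : ℝ) ^ (-α)) * ((n + 1 : ℕ) : ℝ) ^ (-α) := by
  filter_upwards [(tendsto_natCast_atTop_atTop.comp (tendsto_add_atTop_nat 1)).eventually
    (eventually_rpow_neg_sub_one_le hα hc)] with n hn
  simpa using hn

lemma le_mul_rpow_mul_rpow_neg_of_le {G α : ℝ} (hG : 0 ≤ G) (hα : 0 ≤ α) {n N : ℕ} (hn : 1 ≤ n)
    (hnN : n ≤ N) : G ≤ G * (N : ℝ) ^ α * (n : ℝ) ^ (-α) := by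
  have hNpos : (0 : ℝ) < N := by exact_mod_cast hn.trans hnN
  calc G = G * (N : ℝ) ^ α * (N : ℝ) ^ (-α) := by
        rw [rpow_neg hNpos.le, mul_assoc, mul_inv_cancel₀ (by positivity), mul_one]
    _ ≤ G * (N : ℝ) ^ α * (n : ℝ) ^ (-α) := by
        gcongr _ * ?_
        exact rpow_le_rpow_of_nonpos (Nat.cast_pos.2 hn) (Nat.cast_le.2 hnN) (neg_nonpos.2 hα)

theorem exists_le_mul_rpow_neg_of_le_mul_add {μc C η α : ℝ} (hμc : 0 < μc) (hη : 0 < η)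
    (hα0 : 0 < α) (hα1 : α < 1) :
    ∃ K : ℝ, 0 < K ∧ ∀ z : ℕ → ℝ, (∀ n, 0 ≤ z n) →
      (∀ n : ℕ, 1 ≤ n →
        z n ≤ (1 - μc * (η * (n : ℝ) ^ (-α)) + C * (η * (n : ℝ) ^ (-α)) ^ 2) * z (n - 1)
          + C * (η * (n : ℝ) ^ (-α)) ^ 2) →
      ∀ n : ℕ, 1 ≤ n → z n ≤ K * (n : ℝ) ^ (-α) * (1 + z 0) := by
  set s : ℕ → ℝ := fun n => (n : ℝ) ^ (-α)
  set e : ℕ → ℝ := fun n => η * s n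
  have hs : ∀ n, 0 ≤ s n := fun n => rpow_nonneg n.cast_nonneg _
  have hlim : Tendsto (fun n : ℕ => e (n + 1)) atTop (𝓝 0) := by
    simpa [e, s] using ((tendsto_rpow_neg_atTop hα0).comp
      (tendsto_natCast_atTop_atTop.comp (tendsto_add_atTop_nat 1))).const_mul η
  have hratio : ∀ᶠ n : ℕ in atTop, s n ≤ (1 + μc / 4 * e (n + 1)) * s (n + 1) := by
    simpa only [mul_assoc] using
      eventually_natCast_rpow_neg_le_succ hα1 (by positivity : 0 < μc / 4 * η)
  obtain ⟨N, hN⟩ := eventually_atTop.1 ((eventually_ge_atTop 1).and <| hratio.and <|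
    (hlim.const_mul C).eventually (ge_mem_nhds (by simpa using half_pos hμc : C * 0 < μc / 2))
      |>.and <| (hlim.const_mul (μc / 2)).eventually (ge_mem_nhds (by simp : μc / 2 * 0 < 1)))
  set A : ℕ → ℝ := fun n => 1 - μc * e n + C * e n ^ 2
  set B : ℕ → ℝ := fun n => C * e n ^ 2
  set G := ∏ k ∈ range N, (|A (k + 1)| + |B (k + 1)| + 1)
  have hN1 : 1 ≤ N := (hN N le_rfl).1
  set K := max (G * (N : ℝ) ^ α) (4 * C * η / μc)
  have hGK : ∀ n, 1 ≤ n → n ≤ N → G ≤ K * s n := fun n hn hnN =>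
    (le_mul_rpow_mul_rpow_neg_of_le (prod_nonneg fun k _ => by positivity) hα0.le hn hnN).trans
      (by gcongr; exact le_max_left _ _)
  refine ⟨K, lt_max_of_lt_left (by positivity), fun z hz hrec => ?_⟩
  have hrec' : ∀ n, z (n + 1) ≤ A (n + 1) * z n + B (n + 1) := fun n => by
    simpa only [Nat.add_sub_cancel] using hrec (n + 1) (by omega)
  have hw : 1 ≤ 1 + z 0 := by linarith [hz 0]
  have hK0 : 0 ≤ K := le_trans (by positivity) (le_max_left _ _)
  have hbM : C * η ≤ μc / 4 * (K * (1 + z 0)) := by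
    have hK : 4 * C * η ≤ K * μc := (div_le_iff₀ hμc).1 (le_max_right _ _)
    nlinarith [mul_le_mul_of_nonneg_left hw (mul_nonneg hK0 hμc.le)]
  have hzN : z N ≤ K * (1 + z 0) * s N :=
    calc z N ≤ G * (1 + z 0) := le_prod_mul_of_le_mul_add hz hrec' le_rfl
      _ ≤ K * s N * (1 + z 0) := mul_le_mul_of_nonneg_right (hGK N hN1 le_rfl) (by linarith)
      _ = K * (1 + z 0) * s N := by ring
  have htail := le_mul_of_le_one_sub_mul_add_sq hη.le hs hz (by positivity) hbM
    (fun n _ => hrec' n) (fun n hn => (hN n hn).2.2.1) (fun n hn => (hN n hn).2.2.2)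
    (fun n hn => (hN n hn).2.1) hzN
  intro n hn
  rcases le_total n N with hnN | hNn
  · calc z n ≤ G * (1 + z 0) := le_prod_mul_of_le_mul_add hz hrec' hnN
      _ ≤ K * s n * (1 + z 0) :=
          mul_le_mul_of_nonneg_right (hGK n hn hnN) (by linarith)
  · simpa only [mul_right_comm] using htail n hNn

theorem stmt_16_general (μc C₁ η α : ℝ) (hμc : 0 < μc) (hη : 0 < η)
    (hα : 0 < α ∧ α < 1) :
    ∃ K : ℝ, 0 < K ∧
      ∀ (Ω : Type) (m0 : MeasurableSpace Ω) (μ : Measure Ω), IsProbabilityMeasure μ →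
      ∀ (E : Type) [NormedAddCommGroup E] [NormedSpace ℝ E] [CompleteSpace E],
      ∀ (𝒢 : Filtration ℕ m0) (x : ℕ → Ω → E) (xstar x₀ : E),
        (∀ ω, x 0 ω = x₀) →
        (∀ n, StronglyMeasurable[𝒢 n] (x n)) →
        (∀ n, Integrable (fun ω => ‖x n ω - xstar‖ ^ 2) μ) →
        (∀ n : ℕ, 1 ≤ n →
          μ[fun ω => ‖x n ω - xstar‖ ^ 2|𝒢 (n - 1)] ≤ᵐ[μ]
            fun ω => (1 - μc * (η * (n : ℝ) ^ (-α)) + C₁ * (η * (n : ℝ) ^ (-α)) ^ 2) *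
              ‖x (n - 1) ω - xstar‖ ^ 2 + C₁ * (η * (n : ℝ) ^ (-α)) ^ 2) →
        ∀ n : ℕ, 1 ≤ n →
          (∫ ω, ‖x n ω - xstar‖ ^ 2 ∂μ) ≤ K * (n : ℝ) ^ (-α) * (1 + ‖x₀ - xstar‖ ^ 2) := by
  obtain ⟨K, hK, hbound⟩ := exists_le_mul_rpow_neg_of_le_mul_add (C := C₁) hμc hη hα.1 hα.2
  refine ⟨K, hK, fun Ω m0 μ _ E _ _ _ 𝒢 x xstar x₀ hx₀ _ hint hrec n hn => ?_⟩
  refine (hbound (fun k => ∫ ω, ‖x k ω - xstar‖ ^ 2 ∂μ)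
    (fun k => integral_nonneg fun ω => by positivity) (fun k hk => ?_) n hn).trans_eq
    (by simp [hx₀])
  refine (integral_le_integral_of_condExp_le (𝒢.le (k - 1))
    (((hint (k - 1)).const_mul _).add (integrable_const _)) (hrec k hk)).trans_eq ?_
  rw [integral_add' ((hint (k - 1)).const_mul _) (integrable_const _), integral_const_mul,
    integral_const]
  simp

/-- If the iterates `x n` satisfy the conditional recursion
`E_{n-1}‖x n - x*‖² ≤ (1 - μ η_n + C₁ η_n²) ‖x_{n-1} - x*‖² + C₁ η_n²` with `η_n = η n^{-α}`,
`α ∈ (0,1)`, then `E‖x n - x*‖² ≤ K n^{-α} (1 + ‖x₀ - x*‖²)` where `K` depends only on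
`μ, C₁, η, α`. -/
theorem stmt_16 (μc C₁ η α : ℝ) (hμc : 0 < μc) (hC₁ : 0 < C₁) (hη : 0 < η)
    (hα : 0 < α ∧ α < 1) :
    ∃ K : ℝ, 0 < K ∧
      ∀ (Ω : Type) (m0 : MeasurableSpace Ω) (μ : Measure Ω), IsProbabilityMeasure μ →
      ∀ (E : Type) [NormedAddCommGroup E] [NormedSpace ℝ E] [CompleteSpace E],
      ∀ (𝒢 : Filtration ℕ m0) (x : ℕ → Ω → E) (xstar x₀ : E),
        (∀ ω, x 0 ω = x₀) →
        (∀ n, StronglyMeasurable[𝒢 n] (x n)) →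
        (∀ n, Integrable (fun ω => ‖x n ω - xstar‖ ^ 2) μ) →
        (∀ n : ℕ, 1 ≤ n →
          μ[fun ω => ‖x n ω - xstar‖ ^ 2|𝒢 (n - 1)] ≤ᵐ[μ]
            fun ω => (1 - μc * (η * (n : ℝ) ^ (-α)) + C₁ * (η * (n : ℝ) ^ (-α)) ^ 2) *
              ‖x (n - 1) ω - xstar‖ ^ 2 + C₁ * (η * (n : ℝ) ^ (-α)) ^ 2) →
        ∀ n : ℕ, 1 ≤ n →
          (∫ ω, ‖x n ω - xstar‖ ^ 2 ∂μ) ≤ K * (n : ℝ) ^ (-α) * (1 + ‖x₀ - xstar‖ ^ 2) :=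
  stmt_16_general μc C₁ η α hμc hη hα
end
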